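/- arXiv:2506.05185 — 2 statements merged into one kernel-verified Lean document; each statement's English description precedes it below -/
import Mathlib

section
/- Let Q be a proper convex quadrangle in ℝ² such that the midpoints of its four edges are exactly the points (1,0), (0,1), (-1,0), (0,-1) (the vertices of the ℓ∞ unit ball's dual, i.e. the ℓ¹ unit ball). Then Q is contained in 3·B∞², the ℓ∞ ball of radius 3 centered at the origin. -/
/-! If the diagonals `[A, C]` and `[B, D]` meet at `P = a • A + b • C = c • B + d • D`, then
`B = a • m₁ + b • m₂ + d • (m₂ - m₃)`, where `m₁, m₂, m₃` are the midpoints of `AB, BC, CD`.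
So when all edge midpoints lie in the ball of radius `r` of a normed space, the vertex `B`, and by
relabelling every vertex, lies in the ball of radius `r + 2r`; so does the quadrangle, being convex. -/

open Set Metric

theorem exists_eq_add_smul_midpoint_sub_of_mem_segment_inter {E : Type*} [AddCommGroup E]
    [Module ℝ E] {A B C D P : E} (hAC : P ∈ segment ℝ A C) (hBD : P ∈ segment ℝ B D) :
    ∃ u ∈ segment ℝ (midpoint ℝ A B) (midpoint ℝ B C), ∃ d ∈ Icc (0 : ℝ) 1,
      B = u + d • (midpoint ℝ B C - midpoint ℝ C D) := by
  obtain ⟨a, b, ha, hb, hab, rfl⟩ := hAC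
  obtain ⟨c, d, hc, hd, hcd, hP⟩ := hBD
  refine ⟨a • midpoint ℝ A B + b • midpoint ℝ B C, ⟨a, b, ha, hb, hab, rfl⟩,
    d, ⟨hd, by linarith⟩, ?_⟩
  simp only [midpoint_eq_smul_add ℝ, invOf_eq_inv]
  linear_combination (norm := module) (2⁻¹ : ℝ) • hP - (2⁻¹ : ℝ) • hcd • B - (2⁻¹ : ℝ) • hab • B

theorem norm_le_three_mul_of_mem_segment_inter {E : Type*} [SeminormedAddCommGroup E]
    [NormedSpace ℝ E] {A B C D P : E} {r : ℝ} (hAB : ‖midpoint ℝ A B‖ ≤ r)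
    (hBC : ‖midpoint ℝ B C‖ ≤ r) (hCD : ‖midpoint ℝ C D‖ ≤ r)
    (hAC : P ∈ segment ℝ A C) (hBD : P ∈ segment ℝ B D) : ‖B‖ ≤ 3 * r := by
  obtain ⟨u, hu, d, ⟨hd₀, hd₁⟩, hB⟩ :=
    exists_eq_add_smul_midpoint_sub_of_mem_segment_inter hAC hBD
  have hu : ‖u‖ ≤ r := by
    simpa using (convex_closedBall (0 : E) r).segment_subset
      (mem_closedBall_zero_iff.2 hAB) (mem_closedBall_zero_iff.2 hBC) hu
  have hsub : ‖midpoint ℝ B C - midpoint ℝ C D‖ ≤ 2 * r :=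
    (norm_sub_le (midpoint ℝ B C) (midpoint ℝ C D)).trans (by linarith)
  calc ‖B‖ = ‖u + d • (midpoint ℝ B C - midpoint ℝ C D)‖ := congrArg _ hB
    _ ≤ ‖u‖ + d * ‖midpoint ℝ B C - midpoint ℝ C D‖ :=
        (norm_add_le _ _).trans_eq (by rw [norm_smul, Real.norm_of_nonneg hd₀])
    _ ≤ r + 1 * (2 * r) := by gcongr
    _ = 3 * r := by ring

theorem convexHull_quadrangle_subset_closedBall {E : Type*} [SeminormedAddCommGroup E]
    [NormedSpace ℝ E] {A B C D : E} {r : ℝ} (hAB : ‖midpoint ℝ A B‖ ≤ r)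
    (hBC : ‖midpoint ℝ B C‖ ≤ r) (hCD : ‖midpoint ℝ C D‖ ≤ r) (hDA : ‖midpoint ℝ D A‖ ≤ r)
    (hdiag : (segment ℝ A C ∩ segment ℝ B D).Nonempty) :
    convexHull ℝ {A, B, C, D} ⊆ closedBall 0 (3 * r) := by
  obtain ⟨P, hAC, hBD⟩ := hdiag
  have hCA := segment_symm ℝ A C ▸ hAC
  have hDB := segment_symm ℝ B D ▸ hBD
  refine convexHull_min ?_ (convex_closedBall _ _)
  simp only [insert_subset_iff, singleton_subset_iff, mem_closedBall_zero_iff]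
  exact ⟨norm_le_three_mul_of_mem_segment_inter hDA hAB hBC hDB hAC,
    norm_le_three_mul_of_mem_segment_inter hAB hBC hCD hAC hBD,
    norm_le_three_mul_of_mem_segment_inter hBC hCD hDA hBD hCA,
    norm_le_three_mul_of_mem_segment_inter hCD hDA hAB hCA hDB⟩

theorem Prod.closedBall_zero_eq_Icc (r : ℝ) :
    closedBall (0 : ℝ × ℝ) r = Icc (-r, -r) (r, r) := by
  rw [Prod.zero_eq_mk, ← closedBall_prod_same, Real.closedBall_eq_Icc, Icc_prod_Icc, zero_sub,
    zero_add]

theorem quadrangle_subset_three_ball_general (A B C D : ℝ × ℝ)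
    (horder : (segment ℝ A C ∩ segment ℝ B D).Nonempty)
    (h1 : midpoint ℝ A B = ((1 : ℝ), (0 : ℝ)))
    (h2 : midpoint ℝ B C = ((0 : ℝ), (1 : ℝ)))
    (h3 : midpoint ℝ C D = ((-1 : ℝ), (0 : ℝ)))
    (h4 : midpoint ℝ D A = ((0 : ℝ), (-1 : ℝ))) :
    convexHull ℝ {A, B, C, D} ⊆ Set.Icc ((-3 : ℝ), (-3 : ℝ)) ((3 : ℝ), (3 : ℝ)) := by
  rw [← Prod.closedBall_zero_eq_Icc, show (3 : ℝ) = 3 * 1 by norm_num]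
  apply convexHull_quadrangle_subset_closedBall _ _ _ _ horder <;>
    simp [h1, h2, h3, h4, Prod.norm_def]

/-- If the midpoints of the edges of a proper convex quadrangle `Q` are the points
`(1,0), (0,1), (-1,0), (0,-1)`, then `Q ⊆ 3 ⬝ B∞² = [-3,3]²`. -/
theorem quadrangle_subset_three_ball (A B C D : ℝ × ℝ)
    (hA : A ∉ convexHull ℝ {B, C, D}) (hB : B ∉ convexHull ℝ {A, C, D})
    (hC : C ∉ convexHull ℝ {A, B, D}) (hD : D ∉ convexHull ℝ {A, B, C})
    (horder : (segment ℝ A C ∩ segment ℝ B D).Nonempty)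
    (h1 : midpoint ℝ A B = ((1 : ℝ), (0 : ℝ)))
    (h2 : midpoint ℝ B C = ((0 : ℝ), (1 : ℝ)))
    (h3 : midpoint ℝ C D = ((-1 : ℝ), (0 : ℝ)))
    (h4 : midpoint ℝ D A = ((0 : ℝ), (-1 : ℝ))) :
    convexHull ℝ {A, B, C, D} ⊆ Set.Icc ((-3 : ℝ), (-3 : ℝ)) ((3 : ℝ), (3 : ℝ)) :=
  quadrangle_subset_three_ball_general A B C D horder h1 h2 h3 h4
end

section
/- For c ≥ 14/5 and δ ∈ [0, 1/10], define ζ_{c,δ}(t) = (c/(5(1-2δ))) · [ ((c(3-4δ)+t-1)(4c(3-4δ)+(7+4δ-20δ²)(t-1))) / (c(9-20δ+20δ²)+4(t-1)) - (3-4δ)(t-1) ]. Then ζ_{c,δ} is strictly decreasing on the interval [-c/2, ∞). -/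
/-!
Dividing numerator by denominator, `ζ_{c,δ}(t) = C - (c(1-2δ)/4) (u + μ²/u)`, where
`u = t - t₀` is the distance to the pole `t₀` of `ζ_{c,δ}` and `μ = c(1-2δ)(3+10δ)/4`;
the remainder of the division factors as a perfect square because
`16(3-4δ) - (7+4δ-20δ²)(9-20δ+20δ²) = -5(1-2δ)³(3+10δ)`.
Since `u ↦ u + μ²/u` is strictly increasing for `u ≥ μ`, it remains to check that
`t ≥ -c/2` forces `u ≥ μ`, which amounts to `c(1-6δ+10δ²) ≥ 1`.
-/

open Set

theorem strictMonoOn_add_sq_div {μ : ℝ} (hμ : 0 ≤ μ) :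
    StrictMonoOn (fun x : ℝ => x + μ ^ 2 / x) (Ici μ) := by
  intro x hx y hy hxy
  rcases hμ.eq_or_lt with rfl | hμ
  · simpa using hxy
  have hx0 : 0 < x := hμ.trans_le hx
  have hy0 : 0 < y := hx0.trans hxy
  have hμxy : μ ^ 2 < x * y := by nlinarith [mem_Ici.1 hx]
  have hdiff : y + μ ^ 2 / y - (x + μ ^ 2 / x) = (y - x) * (x * y - μ ^ 2) / (x * y) := by
    field_simp
    ring
  have hpos : 0 < (y - x) * (x * y - μ ^ 2) / (x * y) := by
    have := sub_pos.2 hxy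
    have := sub_pos.2 hμxy
    positivity
  show x + μ ^ 2 / x < y + μ ^ 2 / y
  linarith

noncomputable section

def zeta (c δ t : ℝ) : ℝ :=
  c / (5 * (1 - 2 * δ)) *
    (((c * (3 - 4 * δ) + t - 1) * (4 * c * (3 - 4 * δ) + (7 + 4 * δ - 20 * δ ^ 2) * (t - 1))) /
        (c * (9 - 20 * δ + 20 * δ ^ 2) + 4 * (t - 1)) -
      (3 - 4 * δ) * (t - 1))

def zetaPole (c δ : ℝ) : ℝ := 1 - c * (9 - 20 * δ + 20 * δ ^ 2) / 4

def zetaScale (c δ : ℝ) : ℝ := c * (1 - 2 * δ) * (3 + 10 * δ) / 4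

end

theorem zeta_sub_zeta {c δ x y : ℝ} (hδ : δ ≠ 1 / 2) (hx : x ≠ zetaPole c δ)
    (hy : y ≠ zetaPole c δ) :
    zeta c δ x - zeta c δ y = c * (1 - 2 * δ) / 4 *
      ((y - zetaPole c δ) + zetaScale c δ ^ 2 / (y - zetaPole c δ) -
        ((x - zetaPole c δ) + zetaScale c δ ^ 2 / (x - zetaPole c δ))) := by
  have hδ' : 1 - 2 * δ ≠ 0 := by
    intro h
    exact hδ (by linarith)
  obtain ⟨u, rfl⟩ : ∃ u, x = zetaPole c δ + u := ⟨x - zetaPole c δ, by ring⟩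
  obtain ⟨v, rfl⟩ : ∃ v, y = zetaPole c δ + v := ⟨y - zetaPole c δ, by ring⟩
  have hu : u ≠ 0 := by rintro rfl; simp at hx
  have hv : v ≠ 0 := by rintro rfl; simp at hy
  have hden : ∀ w, c * (9 - 20 * δ + 20 * δ ^ 2) + 4 * (zetaPole c δ + w - 1) = 4 * w := by
    intro w
    unfold zetaPole
    ring
  unfold zeta
  rw [hden, hden, add_sub_cancel_left, add_sub_cancel_left]
  unfold zetaPole zetaScale
  field_simp
  ring

theorem zetaScale_le_sub_zetaPole {c δ t : ℝ} (hc : 2 ≤ c) (hδ : δ ≤ 1 / 10) (ht : -(c / 2) ≤ t) :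
    zetaScale c δ ≤ t - zetaPole c δ := by
  have hroots : 0 ≤ c * ((1 / 10 - δ) * (1 / 2 - δ)) :=
    mul_nonneg (by linarith) (mul_nonneg (by linarith) (by linarith))
  unfold zetaScale zetaPole
  nlinarith

/-- For `c ≥ 14/5` and `δ ∈ [0, 1/10]`, the function `ζ_{c,δ}` is strictly decreasing
on `[-c/2, ∞)`. -/
theorem zeta_strictAntiOn (c δ : ℝ) (hc : 14 / 5 ≤ c) (hδ : δ ∈ Set.Icc (0 : ℝ) (1 / 10)) :
    StrictAntiOn (fun t : ℝ =>
      c / (5 * (1 - 2 * δ)) *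
        (((c * (3 - 4 * δ) + t - 1) *
            (4 * c * (3 - 4 * δ) + (7 + 4 * δ - 20 * δ ^ 2) * (t - 1))) /
              (c * (9 - 20 * δ + 20 * δ ^ 2) + 4 * (t - 1)) -
          (3 - 4 * δ) * (t - 1)))
      (Set.Ici (-(c / 2))) := by
  obtain ⟨hδ0, hδ1⟩ := hδ
  have hδ2 : 0 < 1 - 2 * δ := by linarith
  have hμ : 0 < zetaScale c δ := by
    unfold zetaScale
    have : 0 < c := by linarith
    positivity
  intro x hx y hy hxy
  have hxμ := zetaScale_le_sub_zetaPole (by linarith) hδ1 (mem_Ici.1 hx)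
  have hyμ := zetaScale_le_sub_zetaPole (by linarith) hδ1 (mem_Ici.1 hy)
  show zeta c δ y < zeta c δ x
  rw [← sub_pos, zeta_sub_zeta (by linarith) (by linarith) (by linarith)]
  have hmono := strictMonoOn_add_sq_div hμ.le (mem_Ici.2 hxμ) (mem_Ici.2 hyμ) (by linarith)
  exact mul_pos (by positivity) (sub_pos.2 hmono)
end
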